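/- arXiv:1810.07569 — 2 statements merged into one kernel-verified Lean document; each statement's English description precedes it below -/
import Mathlib

section
/- Fix Θ ∈ (0,π]. Then 𝒢_ξ·𝒢_ξ = 𝒢_b·𝒢_ξ = 𝒢_ξ·𝒢_b, where the product of two sets of matrices 𝒢₁, 𝒢₂ is {A·B : A ∈ 𝒢₁, B ∈ 𝒢₂}. -/
/-!
A unit quaternion with vanishing `j`-component can be written both as `p j⁻¹` and as `j r` with
`p`, `r` pure unit quaternions, so a product `A B` of two rotations about axes in the `xz`-plane is
`(p j⁻¹)(j r) = p r = -p ⬝ r + p × r`. This product does not change when `p` and `r` are rotated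
together in their common plane. In these coordinates membership in `𝒢_ξ` is the sign condition
`Q ≤ 0` for a quadratic form `Q` that is a product of two linear forms, and membership in `𝒢_b` is
`Q = 0`. On the circle `s ↦ p(s)` of the joint rotation, `Q(p(s)) = K (cos (2s - σ) - m)` and
`Q(r(s))` is the same function shifted by the fixed angle between `p` and `r`. Of two intersecting
arcs of equal length, each contains an endpoint of the other, so for some `s` we get
`Q(p(s)) = 0` and `Q(r(s)) ≤ 0`, i.e. `A B ∈ 𝒢_b 𝒢_ξ`; exchanging the roles of `p` and `r` gives
`A B ∈ 𝒢_ξ 𝒢_b`.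
-/

open Real

/-- The SU(2) rotation by angle φ about the axis (sin θ cos ψ, sin θ sin ψ, cos θ). -/
noncomputable def Rot (θ ψ φ : ℝ) : Matrix (Fin 2) (Fin 2) ℂ :=
  !![(Real.cos (φ/2) : ℂ) - Complex.I * (Real.sin (φ/2) : ℂ) * (Real.cos θ : ℂ),
     -Complex.I * (Real.sin (φ/2) : ℂ) * (Real.sin θ : ℂ) * Complex.exp (-(Complex.I * (ψ : ℂ)));
     -Complex.I * (Real.sin (φ/2) : ℂ) * (Real.sin θ : ℂ) * Complex.exp (Complex.I * (ψ : ℂ)),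
     (Real.cos (φ/2) : ℂ) + Complex.I * (Real.sin (φ/2) : ℂ) * (Real.cos θ : ℂ)]

/-- Product of two sets of matrices. -/
def setMul (G₁ G₂ : Set (Matrix (Fin 2) (Fin 2) ℂ)) : Set (Matrix (Fin 2) (Fin 2) ℂ) :=
  {C | ∃ A ∈ G₁, ∃ B ∈ G₂, C = A * B}

/-- Rotations with axis in the x-z plane making angle at most Θ with ẑ. -/
noncomputable def Gxi (Θ : ℝ) : Set (Matrix (Fin 2) (Fin 2) ℂ) :=
  {M | ∃ θ φ : ℝ, θ ∈ Set.Icc 0 Θ ∧ φ ∈ Set.Ico 0 (4*π) ∧ M = Rot θ 0 φ}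

/-- Rotations about the axis ẑ. -/
noncomputable def Gz : Set (Matrix (Fin 2) (Fin 2) ℂ) :=
  {M | ∃ φ : ℝ, φ ∈ Set.Ico 0 (4*π) ∧ M = Rot 0 0 φ}

/-- Rotations about the axis m̂ = (sin Θ, 0, cos Θ). -/
noncomputable def Gm (Θ : ℝ) : Set (Matrix (Fin 2) (Fin 2) ℂ) :=
  {M | ∃ φ : ℝ, φ ∈ Set.Ico 0 (4*π) ∧ M = Rot Θ 0 φ}

/-- The boundary rotations. -/
noncomputable def Gb (Θ : ℝ) : Set (Matrix (Fin 2) (Fin 2) ℂ) := Gz ∪ Gm Θ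

open Matrix Set

lemma exists_polar (a b : ℝ) : ∃ ρ δ : ℝ, 0 ≤ ρ ∧ a = ρ * cos δ ∧ b = ρ * sin δ :=
  ⟨‖(⟨a, b⟩ : ℂ)‖, Complex.arg ⟨a, b⟩, norm_nonneg _,
    (Complex.norm_mul_cos_arg ⟨a, b⟩).symm, (Complex.norm_mul_sin_arg ⟨a, b⟩).symm⟩

lemma exists_cos_sin_eq {a b : ℝ} (h : a ^ 2 + b ^ 2 = 1) : ∃ δ, cos δ = a ∧ sin δ = b := by
  obtain ⟨ρ, δ, hρ, rfl, rfl⟩ := exists_polar a b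
  have hρ1 : ρ ^ 2 = 1 := by linear_combination h - ρ ^ 2 * sin_sq_add_cos_sq δ
  have : ρ = 1 := by nlinarith
  exact ⟨δ, by simp [this], by simp [this]⟩

lemma two_mul_sq_sub_one_le_cos_sub {m x y : ℝ} (hm : m ≤ 0) (hx : cos x ≤ m) (hy : cos y ≤ m) :
    2 * m ^ 2 - 1 ≤ cos (x - y) := by
  have hxy : m ^ 2 ≤ cos x * cos y := by nlinarith
  have hm1 : m ^ 2 ≤ 1 := by nlinarith [neg_one_le_cos x]
  -- `(cos x cos y - 2m² + 1)² - sin² x sin² y = (cos x - cos y)² + 4 (1 - m²)(cos x cos y - m²)`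
  have hsq : (sin x * sin y) ^ 2 ≤ (cos x * cos y - 2 * m ^ 2 + 1) ^ 2 := by
    have : (sin x * sin y) ^ 2 = (1 - cos x ^ 2) * (1 - cos y ^ 2) := by
      rw [mul_pow, sin_sq, sin_sq]
    nlinarith [sq_nonneg (cos x - cos y), mul_nonneg (sub_nonneg.2 hm1) (sub_nonneg.2 hxy)]
  rw [cos_sub]
  nlinarith [abs_le_of_sq_le_sq' hsq (by nlinarith)]

lemma exists_cos_eq_and_cos_add_le {m x d : ℝ} (hm₁ : -1 ≤ m) (hm₂ : m ≤ 1)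
    (hx : cos x ≤ m) (hxd : cos (x + d) ≤ m) : ∃ y, cos y = m ∧ cos (y + d) ≤ m := by
  have hc : cos (arccos m) = m := cos_arccos hm₁ hm₂
  have hs : sin (arccos m) ^ 2 = 1 - m ^ 2 := by rw [sin_sq, hc]
  have hsum : (cos (arccos m + d) - m) + (cos (-arccos m + d) - m) = 2 * m * (cos d - 1) := by
    rw [cos_add, cos_add, cos_neg, sin_neg, hc]; ring
  have hprod : (cos (arccos m + d) - m) * (cos (-arccos m + d) - m)
      = (1 - cos d) * (2 * m ^ 2 - 1 - cos d) := by
    rw [cos_add, cos_add, cos_neg, sin_neg, hc]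
    linear_combination (-(sin d) ^ 2) * hs - (1 - m ^ 2) * sin_sq_add_cos_sq d
  -- the sum is `≤ 0` when `0 ≤ m`; when `m < 0` the product is, since then `2m² - 1 ≤ cos d`
  have key : cos (arccos m + d) ≤ m ∨ cos (-arccos m + d) ≤ m := by
    by_contra! h
    rcases le_or_gt 0 m with hm | hm
    · nlinarith [cos_le_one d]
    · have := two_mul_sq_sub_one_le_cos_sub hm.le hxd hx
      rw [add_sub_cancel_left] at this
      nlinarith [cos_le_one d]
  rcases key with h | h
  · exact ⟨arccos m, hc, h⟩
  · exact ⟨-arccos m, by rw [cos_neg, hc], h⟩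

lemma exists_mul_eq_mul_cos_sub (a₁ a₂ b₁ b₂ : ℝ) :
    ∃ K σ m : ℝ, 0 ≤ K ∧ -1 ≤ m ∧ m ≤ 1 ∧ ∀ s,
      (a₁ * cos s + a₂ * sin s) * (b₁ * cos s + b₂ * sin s) = K * (cos (2 * s - σ) - m) := by
  obtain ⟨ρ, δ, hρ, rfl, rfl⟩ := exists_polar a₁ a₂
  obtain ⟨ρ', δ', hρ', rfl, rfl⟩ := exists_polar b₁ b₂
  refine ⟨ρ * ρ' / 2, δ + δ', -cos (δ - δ'), by positivity, by linarith [cos_le_one (δ - δ')],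
    by linarith [neg_one_le_cos (δ - δ')], fun s => ?_⟩
  rw [cos_sub, cos_two_mul, sin_two_mul, cos_add, sin_add, cos_sub]
  linear_combination (ρ * ρ' * sin δ * sin δ') * sin_sq_add_cos_sq s

lemma exists_mul_eq_zero_and_mul_add_nonpos (a₁ a₂ b₁ b₂ τ : ℝ) (h₀ : a₁ * b₁ ≤ 0)
    (hτ : (a₁ * cos τ + a₂ * sin τ) * (b₁ * cos τ + b₂ * sin τ) ≤ 0) :
    ∃ s, (a₁ * cos s + a₂ * sin s) * (b₁ * cos s + b₂ * sin s) = 0 ∧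
      (a₁ * cos (s + τ) + a₂ * sin (s + τ)) * (b₁ * cos (s + τ) + b₂ * sin (s + τ)) ≤ 0 := by
  obtain ⟨K, σ, m, hK, hm₁, hm₂, hf⟩ := exists_mul_eq_mul_cos_sub a₁ a₂ b₁ b₂
  have hf₀ := hf 0
  simp only [cos_zero, sin_zero, mul_one, mul_zero, add_zero, zero_sub] at hf₀
  simp only [hf] at hτ ⊢
  rcases hK.eq_or_lt with rfl | hK
  · exact ⟨0, by simp, by simp⟩
  have hx : cos (-σ) ≤ m := by nlinarith
  have hxd : cos (-σ + 2 * τ) ≤ m := by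
    rw [neg_add_eq_sub]
    nlinarith
  obtain ⟨y, hy, hyd⟩ := exists_cos_eq_and_cos_add_le hm₁ hm₂ hx hxd
  refine ⟨(y + σ) / 2, by rw [← hy]; ring_nf, ?_⟩
  rw [show 2 * ((y + σ) / 2 + τ) - σ = y + 2 * τ by ring]
  nlinarith

lemma dotProduct_self_fin_three (v : Fin 3 → ℝ) : v ⬝ᵥ v = v 0 ^ 2 + v 1 ^ 2 + v 2 ^ 2 := by
  simp [dotProduct, Fin.sum_univ_three, sq]

lemma exists_unit_orthogonal (p : Fin 3 → ℝ) : ∃ e : Fin 3 → ℝ, e ⬝ᵥ e = 1 ∧ p ⬝ᵥ e = 0 := by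
  by_cases h : p 0 ^ 2 + p 1 ^ 2 = 0
  · refine ⟨![1, 0, 0], by simp, ?_⟩
    simp [dotProduct, Fin.sum_univ_three]
    nlinarith
  · have hpos : 0 < p 0 ^ 2 + p 1 ^ 2 := lt_of_le_of_ne (by positivity) (Ne.symm h)
    refine ⟨(√(p 0 ^ 2 + p 1 ^ 2))⁻¹ • ![-p 1, p 0, 0], ?_, ?_⟩
    · rw [dotProduct_self_fin_three]
      simp [mul_pow, inv_pow, sq_sqrt hpos.le]
      field_simp
      ring
    · simp [dotProduct, Fin.sum_univ_three]
      ring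

lemma cos_smul_add_sin_smul_dotProduct {e₁ e₂ : Fin 3 → ℝ} (h₁ : e₁ ⬝ᵥ e₁ = 1)
    (h₂ : e₂ ⬝ᵥ e₂ = 1) (h₁₂ : e₁ ⬝ᵥ e₂ = 0) (s t : ℝ) :
    (cos s • e₁ + sin s • e₂) ⬝ᵥ (cos t • e₁ + sin t • e₂) = cos (t - s) := by
  simp only [add_dotProduct, dotProduct_add, smul_dotProduct, dotProduct_smul,
    dotProduct_comm e₂ e₁, h₁, h₂, h₁₂, smul_eq_mul, cos_sub]
  ring

lemma cos_smul_add_sin_smul_cross (e₁ e₂ : Fin 3 → ℝ) (s t : ℝ) :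
    (cos s • e₁ + sin s • e₂) ⨯₃ (cos t • e₁ + sin t • e₂) = sin (t - s) • (e₁ ⨯₃ e₂) := by
  simp only [map_add, map_smul, LinearMap.add_apply, LinearMap.smul_apply, cross_self,
    ← cross_anticomm e₁ e₂, sin_sub]
  module

lemma exists_unit_orthogonal_eq_cos_smul_add_sin_smul {p r : Fin 3 → ℝ} (hp : p ⬝ᵥ p = 1)
    (hr : r ⬝ᵥ r = 1) :
    ∃ e : Fin 3 → ℝ, e ⬝ᵥ e = 1 ∧ p ⬝ᵥ e = 0 ∧ ∃ τ, r = cos τ • p + sin τ • e := by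
  set w := r - (p ⬝ᵥ r) • p with hw
  have hpw : p ⬝ᵥ w = 0 := by simp [w, dotProduct_sub, hp]
  have hww : (p ⬝ᵥ r) ^ 2 + w ⬝ᵥ w = 1 := by
    simp only [w, sub_dotProduct, dotProduct_sub, smul_dotProduct, dotProduct_smul, hp,
      dotProduct_comm r p, hr, smul_eq_mul]
    ring
  by_cases h0 : w = 0
  · obtain ⟨e, he, hpe⟩ := exists_unit_orthogonal p
    obtain ⟨τ, hc, hs⟩ := exists_cos_sin_eq (a := p ⬝ᵥ r) (b := 0) (by simpa [h0] using hww)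
    refine ⟨e, he, hpe, τ, ?_⟩
    rw [hc, hs, zero_smul, add_zero, ← sub_eq_zero, ← hw, h0]
  · have hpos : 0 < w ⬝ᵥ w := lt_of_le_of_ne (by rw [dotProduct_self_fin_three]; positivity)
      (Ne.symm (mt dotProduct_self_eq_zero.1 h0))
    set ρ := √(w ⬝ᵥ w)
    have hρ : ρ ^ 2 = w ⬝ᵥ w := sq_sqrt hpos.le
    have hρ0 : ρ ≠ 0 := (sqrt_pos.2 hpos).ne'
    obtain ⟨τ, hc, hs⟩ := exists_cos_sin_eq (a := p ⬝ᵥ r) (b := ρ) (by rw [hρ, hww])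
    refine ⟨ρ⁻¹ • w, ?_, by rw [dotProduct_smul, hpw, smul_zero], τ, ?_⟩
    · rw [smul_dotProduct, dotProduct_smul, ← hρ, smul_eq_mul, smul_eq_mul]
      field_simp
    · rw [hc, hs, smul_smul, mul_inv_cancel₀ hρ0, one_smul, hw]
      abel

/-- `p` and `r` are obtained by rotating `p₀` and `r₀` together in their common plane. -/
theorem exists_isotropic_with_same_dotProduct_and_cross (a b : Fin 3 → ℝ) {p₀ r₀ : Fin 3 → ℝ}
    (hp₀ : p₀ ⬝ᵥ p₀ = 1) (hr₀ : r₀ ⬝ᵥ r₀ = 1)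
    (hQp₀ : (a ⬝ᵥ p₀) * (b ⬝ᵥ p₀) ≤ 0) (hQr₀ : (a ⬝ᵥ r₀) * (b ⬝ᵥ r₀) ≤ 0) :
    ∃ p r : Fin 3 → ℝ, p ⬝ᵥ p = 1 ∧ r ⬝ᵥ r = 1 ∧ p ⬝ᵥ r = p₀ ⬝ᵥ r₀ ∧ p ⨯₃ r = p₀ ⨯₃ r₀ ∧
      (a ⬝ᵥ p) * (b ⬝ᵥ p) = 0 ∧ (a ⬝ᵥ r) * (b ⬝ᵥ r) ≤ 0 := by
  obtain ⟨e, he, hp₀e, τ, rfl⟩ := exists_unit_orthogonal_eq_cos_smul_add_sin_smul hp₀ hr₀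
  set c : ℝ → Fin 3 → ℝ := fun s => cos s • p₀ + sin s • e
  have hlin : ∀ v s, v ⬝ᵥ c s = (v ⬝ᵥ p₀) * cos s + (v ⬝ᵥ e) * sin s := fun v s => by
    simp only [c, dotProduct_add, dotProduct_smul, smul_eq_mul]; ring
  obtain ⟨s, hs, hsτ⟩ := exists_mul_eq_zero_and_mul_add_nonpos (a ⬝ᵥ p₀) (a ⬝ᵥ e) (b ⬝ᵥ p₀)
    (b ⬝ᵥ e) τ hQp₀ (by rwa [← hlin, ← hlin])
  have hdot := cos_smul_add_sin_smul_dotProduct hp₀ he hp₀e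
  refine ⟨c s, c (s + τ), by simp [c, hdot], by simp [c, hdot], ?_, ?_,
    by rwa [hlin, hlin], by rwa [hlin, hlin]⟩
  · rw [hdot, add_sub_cancel_left]
    simp [dotProduct_add, dotProduct_smul, hp₀, hp₀e]
  · rw [cos_smul_add_sin_smul_cross, add_sub_cancel_left]
    simp [cross_self]

/-- The matrix of the quaternion `w + v 0 i + v 1 j + v 2 k`; `Rot θ 0 φ` is the matrix of
`cos (φ/2) + sin (φ/2) (sin θ i + cos θ k)`. -/
noncomputable def quatMat (w : ℝ) (v : Fin 3 → ℝ) : Matrix (Fin 2) (Fin 2) ℂ :=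
  !![(w : ℂ) - Complex.I * v 2, -Complex.I * v 0 - v 1; -Complex.I * v 0 + v 1, w + Complex.I * v 2]

lemma Rot_zero_eq_quatMat (θ φ : ℝ) :
    Rot θ 0 φ = quatMat (cos (φ / 2)) ![sin (φ / 2) * sin θ, 0, sin (φ / 2) * cos θ] := by
  ext i j; fin_cases i <;> fin_cases j <;> simp [Rot, quatMat] <;> ring

lemma exists_half_angle {w s : ℝ} (h : w ^ 2 + s ^ 2 = 1) :
    ∃ φ ∈ Ico 0 (4 * π), cos (φ / 2) = w ∧ sin (φ / 2) = s := by
  obtain ⟨α, hc, hs⟩ := exists_cos_sin_eq h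
  have hmem := toIcoMod_mem_Ico two_pi_pos 0 α
  rw [zero_add] at hmem
  have hα : toIcoMod two_pi_pos 0 α = α - toIcoDiv two_pi_pos 0 α * (2 * π) := by
    rw [toIcoMod, zsmul_eq_mul]
  refine ⟨2 * toIcoMod two_pi_pos 0 α, ⟨by linarith [hmem.1], by linarith [hmem.2]⟩, ?_, ?_⟩
  · rw [mul_div_cancel_left₀ _ two_ne_zero, hα, cos_sub_int_mul_two_pi, hc]
  · rw [mul_div_cancel_left₀ _ two_ne_zero, hα, sin_sub_int_mul_two_pi, hs]

lemma exists_angle_of_cone {Θ x z : ℝ} (hΘ : Θ ∈ Ioc 0 π)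
    (hc : x * (cos Θ * x - sin Θ * z) ≤ 0) :
    ∃ θ ∈ Icc 0 Θ, ∃ s, x = s * sin θ ∧ z = s * cos θ := by
  wlog hx : 0 ≤ x generalizing x z
  · obtain ⟨θ, hθ, s, hxs, hzs⟩ := this (x := -x) (z := -z) (by linarith) (by linarith)
    exact ⟨θ, hθ, -s, by linarith, by linarith⟩
  rcases hx.eq_or_lt with rfl | hx
  · exact ⟨0, ⟨le_rfl, hΘ.1.le⟩, z, by simp, by simp⟩
  set ζ : ℂ := ⟨z, x⟩
  have hζ : 0 < ‖ζ‖ := norm_pos_iff.2 fun h => hx.ne' (congrArg Complex.im h)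
  have hz : ‖ζ‖ * cos (Complex.arg ζ) = z := Complex.norm_mul_cos_arg ζ
  have hx' : ‖ζ‖ * sin (Complex.arg ζ) = x := Complex.norm_mul_sin_arg ζ
  refine ⟨Complex.arg ζ, ⟨Complex.arg_nonneg_iff.2 hx.le, ?_⟩, ‖ζ‖, hx'.symm, hz.symm⟩
  by_contra! h
  have hneg : sin (Θ - Complex.arg ζ) < 0 :=
    sin_neg_of_neg_of_neg_pi_lt (by linarith) (by linarith [Complex.arg_le_pi ζ, hΘ.1])
  have key : ‖ζ‖ * sin (Θ - Complex.arg ζ) = sin Θ * z - cos Θ * x := by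
    rw [sin_sub]; linear_combination sin Θ * hz - cos Θ * hx'
  nlinarith [mul_neg_of_pos_of_neg hζ hneg]

lemma quatMat_mem_Gxi {Θ w x z : ℝ} (hΘ : Θ ∈ Ioc 0 π) (h : w ^ 2 + x ^ 2 + z ^ 2 = 1)
    (hc : x * (cos Θ * x - sin Θ * z) ≤ 0) : quatMat w ![x, 0, z] ∈ Gxi Θ := by
  obtain ⟨θ, hθ, s, rfl, rfl⟩ := exists_angle_of_cone hΘ hc
  obtain ⟨φ, hφ, hw, hs⟩ := exists_half_angle (w := w) (s := s)
    (by linear_combination h - s ^ 2 * sin_sq_add_cos_sq θ)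
  exact ⟨θ, φ, hθ, hφ, by rw [Rot_zero_eq_quatMat, hw, hs]⟩

lemma quatMat_mem_Gb {Θ w x z : ℝ} (h : w ^ 2 + x ^ 2 + z ^ 2 = 1)
    (hc : x * (cos Θ * x - sin Θ * z) = 0) : quatMat w ![x, 0, z] ∈ Gb Θ := by
  rcases mul_eq_zero.1 hc with rfl | hc
  · obtain ⟨φ, hφ, hw, hs⟩ := exists_half_angle (w := w) (s := z) (by linarith)
    exact Or.inl ⟨φ, hφ, by simp [Rot_zero_eq_quatMat, hw, hs]⟩
  · set s := sin Θ * x + cos Θ * z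
    have hx : x = s * sin Θ := by linear_combination cos Θ * hc - x * sin_sq_add_cos_sq Θ
    have hz : z = s * cos Θ := by linear_combination -sin Θ * hc - z * sin_sq_add_cos_sq Θ
    obtain ⟨φ, hφ, hw, hs⟩ := exists_half_angle (w := w) (s := s)
      (by rw [hx, hz] at h; linear_combination h - s ^ 2 * sin_sq_add_cos_sq Θ)
    exact Or.inr ⟨φ, hφ, by rw [Rot_zero_eq_quatMat, hw, hs, ← hx, ← hz]⟩

lemma exists_quatMat_of_mem_Gxi {Θ : ℝ} (hΘ : Θ ≤ π) {A : Matrix (Fin 2) (Fin 2) ℂ}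
    (hA : A ∈ Gxi Θ) : ∃ w x z : ℝ, A = quatMat w ![x, 0, z] ∧ w ^ 2 + x ^ 2 + z ^ 2 = 1 ∧
      x * (cos Θ * x - sin Θ * z) ≤ 0 := by
  obtain ⟨θ, φ, ⟨hθ₀, hθΘ⟩, -, rfl⟩ := hA
  refine ⟨_, _, _, Rot_zero_eq_quatMat θ φ, ?_, ?_⟩
  · linear_combination sin (φ / 2) ^ 2 * sin_sq_add_cos_sq θ + sin_sq_add_cos_sq (φ / 2)
  · have h₁ : 0 ≤ sin θ := sin_nonneg_of_nonneg_of_le_pi hθ₀ (by linarith)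
    have h₂ : 0 ≤ sin (Θ - θ) := sin_nonneg_of_nonneg_of_le_pi (by linarith) (by linarith)
    have : sin (φ / 2) * sin θ * (cos Θ * (sin (φ / 2) * sin θ) - sin Θ * (sin (φ / 2) * cos θ))
        = -(sin (φ / 2) ^ 2 * sin θ * sin (Θ - θ)) := by rw [sin_sub]; ring
    rw [this, neg_nonpos]
    positivity

/- For a pure quaternion `p`, `leftMat p` and `rightMat p` are the matrices of `p j⁻¹` and `j p`;
both are unit quaternions without `j`-component when `p` is a unit vector. -/

noncomputable def leftMat (p : Fin 3 → ℝ) : Matrix (Fin 2) (Fin 2) ℂ :=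
  quatMat (p 1) ![p 2, 0, -p 0]

noncomputable def rightMat (r : Fin 3 → ℝ) : Matrix (Fin 2) (Fin 2) ℂ :=
  quatMat (-r 1) ![r 2, 0, -r 0]

lemma leftMat_mul_rightMat (p r : Fin 3 → ℝ) :
    leftMat p * rightMat r = quatMat (-(p ⬝ᵥ r)) (p ⨯₃ r) := by
  ext i j
  fin_cases i <;> fin_cases j <;> apply Complex.ext <;>
    simp [leftMat, rightMat, quatMat, Matrix.mul_apply, Fin.sum_univ_two, cross_apply, dotProduct,
      Fin.sum_univ_three] <;> ring

/-- `coneForm Θ p ≤ 0` says that the rotation axis of `p j⁻¹` (equivalently, of `j p`) lies, up to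
sign, between `ẑ` and `m̂ = (sin Θ, 0, cos Θ)`. -/
noncomputable def coneForm (Θ : ℝ) (v : Fin 3 → ℝ) : ℝ :=
  (![0, 0, 1] ⬝ᵥ v) * (![sin Θ, 0, cos Θ] ⬝ᵥ v)

lemma coneForm_apply (Θ : ℝ) (v : Fin 3 → ℝ) :
    coneForm Θ v = v 2 * (cos Θ * v 2 - sin Θ * -v 0) := by
  simp only [coneForm, dotProduct, Fin.sum_univ_three, cons_val_zero, cons_val_one, cons_val_two,
    tail_cons, head_cons]
  ring

section Membership

variable {Θ : ℝ} {p : Fin 3 → ℝ}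

lemma leftMat_mem_Gxi (hΘ : Θ ∈ Ioc 0 π) (hp : p ⬝ᵥ p = 1) (hQ : coneForm Θ p ≤ 0) :
    leftMat p ∈ Gxi Θ :=
  quatMat_mem_Gxi hΘ (by rw [dotProduct_self_fin_three] at hp; linear_combination hp)
    (by rwa [coneForm_apply] at hQ)

lemma rightMat_mem_Gxi (hΘ : Θ ∈ Ioc 0 π) (hp : p ⬝ᵥ p = 1) (hQ : coneForm Θ p ≤ 0) :
    rightMat p ∈ Gxi Θ :=
  quatMat_mem_Gxi hΘ (by rw [dotProduct_self_fin_three] at hp; linear_combination hp)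
    (by rwa [coneForm_apply] at hQ)

lemma leftMat_mem_Gb (hp : p ⬝ᵥ p = 1) (hQ : coneForm Θ p = 0) : leftMat p ∈ Gb Θ :=
  quatMat_mem_Gb (by rw [dotProduct_self_fin_three] at hp; linear_combination hp)
    (by rwa [coneForm_apply] at hQ)

lemma rightMat_mem_Gb (hp : p ⬝ᵥ p = 1) (hQ : coneForm Θ p = 0) : rightMat p ∈ Gb Θ :=
  quatMat_mem_Gb (by rw [dotProduct_self_fin_three] at hp; linear_combination hp)
    (by rwa [coneForm_apply] at hQ)

lemma exists_leftMat_of_mem_Gxi (hΘ : Θ ≤ π) {A : Matrix (Fin 2) (Fin 2) ℂ} (hA : A ∈ Gxi Θ) :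
    ∃ p, p ⬝ᵥ p = 1 ∧ coneForm Θ p ≤ 0 ∧ A = leftMat p := by
  obtain ⟨w, x, z, rfl, h, hc⟩ := exists_quatMat_of_mem_Gxi hΘ hA
  refine ⟨![-z, w, x], ?_, ?_, by simp [leftMat]⟩
  · rw [dotProduct_self_fin_three]; simp; linear_combination h
  · rw [coneForm_apply]; simpa using hc

lemma exists_rightMat_of_mem_Gxi (hΘ : Θ ≤ π) {A : Matrix (Fin 2) (Fin 2) ℂ} (hA : A ∈ Gxi Θ) :
    ∃ r, r ⬝ᵥ r = 1 ∧ coneForm Θ r ≤ 0 ∧ A = rightMat r := by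
  obtain ⟨w, x, z, rfl, h, hc⟩ := exists_quatMat_of_mem_Gxi hΘ hA
  refine ⟨![-z, -w, x], ?_, ?_, by simp [rightMat]⟩
  · rw [dotProduct_self_fin_three]; simp; linear_combination h
  · rw [coneForm_apply]; simpa using hc

end Membership

lemma Gb_subset_Gxi {Θ : ℝ} (hΘ : 0 ≤ Θ) : Gb Θ ⊆ Gxi Θ := by
  rintro M (⟨φ, hφ, rfl⟩ | ⟨φ, hφ, rfl⟩)
  exacts [⟨0, φ, ⟨le_rfl, hΘ⟩, hφ, rfl⟩, ⟨Θ, φ, ⟨hΘ, le_rfl⟩, hφ, rfl⟩]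

lemma setMul_mono {G₁ G₁' G₂ G₂' : Set (Matrix (Fin 2) (Fin 2) ℂ)} (h₁ : G₁ ⊆ G₁')
    (h₂ : G₂ ⊆ G₂') : setMul G₁ G₂ ⊆ setMul G₁' G₂' := by
  rintro _ ⟨A, hA, B, hB, rfl⟩
  exact ⟨A, h₁ hA, B, h₂ hB, rfl⟩

lemma setMul_Gxi_Gxi_subset {Θ : ℝ} (hΘ : Θ ∈ Ioc 0 π) :
    setMul (Gxi Θ) (Gxi Θ) ⊆ setMul (Gb Θ) (Gxi Θ) ∩ setMul (Gxi Θ) (Gb Θ) := by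
  rintro _ ⟨A, hA, B, hB, rfl⟩
  obtain ⟨p₀, hp₀, hQp₀, rfl⟩ := exists_leftMat_of_mem_Gxi hΘ.2 hA
  obtain ⟨r₀, hr₀, hQr₀, rfl⟩ := exists_rightMat_of_mem_Gxi hΘ.2 hB
  constructor
  · obtain ⟨p, r, hp, hr, hdot, hcross, hQp, hQr⟩ :=
      exists_isotropic_with_same_dotProduct_and_cross _ _ hp₀ hr₀ hQp₀ hQr₀
    refine ⟨leftMat p, leftMat_mem_Gb hp hQp, rightMat r, rightMat_mem_Gxi hΘ hr hQr, ?_⟩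
    rw [leftMat_mul_rightMat, leftMat_mul_rightMat, hdot, hcross]
  · obtain ⟨r, p, hr, hp, hdot, hcross, hQr, hQp⟩ :=
      exists_isotropic_with_same_dotProduct_and_cross _ _ hr₀ hp₀ hQr₀ hQp₀
    refine ⟨leftMat p, leftMat_mem_Gxi hΘ hp hQp, rightMat r, rightMat_mem_Gb hr hQr, ?_⟩
    rw [leftMat_mul_rightMat, leftMat_mul_rightMat, dotProduct_comm p, hdot, dotProduct_comm r₀,
      ← cross_anticomm r, hcross, cross_anticomm]

theorem stmt5 (Θ : ℝ) (hΘ : Θ ∈ Set.Ioc 0 π) :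
    setMul (Gxi Θ) (Gxi Θ) = setMul (Gb Θ) (Gxi Θ) ∧
    setMul (Gb Θ) (Gxi Θ) = setMul (Gxi Θ) (Gb Θ) := by
  have hb := Gb_subset_Gxi hΘ.1.le
  have hl : setMul (Gb Θ) (Gxi Θ) ⊆ setMul (Gxi Θ) (Gxi Θ) := setMul_mono hb subset_rfl
  have hr : setMul (Gxi Θ) (Gb Θ) ⊆ setMul (Gxi Θ) (Gxi Θ) := setMul_mono subset_rfl hb
  have h := setMul_Gxi_Gxi_subset hΘ
  exact ⟨Subset.antisymm (fun M hM => (h hM).1) hl,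
    Subset.antisymm (fun M hM => (h (hl hM)).2) fun M hM => (h (hr hM)).1⟩
end

section
/- Fix Θ ∈ (0,π/2] and let l be a positive integer. Let θ ∈ [0,π), ψ ∈ [0,π), φ ∈ [0,4π). Then there exist β₀, …, β_{l−1} ∈ [0,4π) and γ₁, …, γ_{l−1} ∈ [0,4π) such that R(θ,ψ,φ) = R(0,0,β₀)·R(Θ,0,γ₁)·R(0,0,β₁)·⋯·R(Θ,0,γ_{l−1})·R(0,0,β_{l−1}) (an alternating z–m–z–…–m–z product of 2l−1 rotations about ẑ and m̂ = (sin Θ, 0, cos Θ), beginning and ending with ẑ) if and only if |δ₁(θ,φ)| ≤ (l−1)·Θ. -/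
open Real

/-- δ₁(θ,φ) = arcsin( sin θ · sin(φ/2) ). -/
noncomputable def delta1 (θ φ : ℝ) : ℝ := Real.arcsin (Real.sin θ * Real.sin (φ/2))

/-!
For `A ∈ SU(2)` let `tilt A = arcsin ‖A 0 1‖`, half the angle by which `A` moves the `z`-axis of
the Bloch sphere; `tilt (R(θ,ψ,φ)) = |δ₁(θ,φ)|`. The tilt vanishes on `z`-rotations, is at most `Θ`
on rotations about `m̂`, and is subadditive (the triangle inequality on the sphere), so an
alternating product with `l - 1` rotations about `m̂` has tilt at most `(l - 1)Θ`.

Conversely, by Euler's decomposition every `A ∈ SU(2)` is `R_z(α) R_x(2 tilt A) R_z(ω)`. Rotations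
about `x̂` add, and an `x`-rotation by `2δ` with `δ ≤ Θ` is a rotation about `m̂` conjugated by
`z`-rotations (choose its angle so that its tilt is `δ` and apply Euler's decomposition to it).
Splitting `2 tilt A ≤ 2(l - 1)Θ` into `l - 1` pieces of size at most `2Θ` gives the product.
-/

open ComplexConjugate

local notation "SU₂" => Matrix.specialUnitaryGroup (Fin 2) ℂ

theorem Rot_angle_zero (θ ψ : ℝ) : Rot θ ψ 0 = 1 := by
  rw [Rot]; simp [Matrix.one_fin_two]

theorem Rot_mul_Rot (θ ψ a b : ℝ) : Rot θ ψ a * Rot θ ψ b = Rot θ ψ (a + b) := by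
  have hexp : Complex.exp (Complex.I * ψ) * Complex.exp (-(Complex.I * ψ)) = 1 := by
    rw [← Complex.exp_add, add_neg_cancel, Complex.exp_zero]
  have hθ := Complex.sin_sq_add_cos_sq θ
  simp only [Rot, Matrix.mul_fin_two, add_div, Real.cos_add, Real.sin_add]
  ext i j
  -- the diagonal entries reduce to `(n̂ · σ)² = 1` for the axis `n̂`
  fin_cases i <;> fin_cases j <;> simp <;>
  first
  | ring1
  | linear_combination Complex.sin (a / 2) * Complex.sin (b / 2) *
      ((Complex.cos θ ^ 2 + Complex.sin θ ^ 2 * Complex.exp (Complex.I * ψ) *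
        Complex.exp (-(Complex.I * ψ))) * Complex.I_sq - hθ - Complex.sin θ ^ 2 * hexp)

theorem Rot_add_int_mul (θ ψ φ : ℝ) (n : ℤ) : Rot θ ψ (φ + n * (4 * π)) = Rot θ ψ φ := by
  have h : (φ + n * (4 * π)) / 2 = φ / 2 + n * (2 * π) := by ring
  simp only [Rot, h, cos_add_int_mul_two_pi, sin_add_int_mul_two_pi]

theorem exists_mem_Ico_Rot_eq (θ ψ φ : ℝ) :
    ∃ φ' ∈ Set.Ico 0 (4 * π), Rot θ ψ φ' = Rot θ ψ φ := by
  have hp : 0 < 4 * π := by positivity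
  refine ⟨toIcoMod hp 0 φ, by simpa using toIcoMod_mem_Ico hp 0 φ, ?_⟩
  conv_rhs => rw [← toIcoMod_add_toIcoDiv_zsmul hp 0 φ, zsmul_eq_mul, Rot_add_int_mul]

theorem Matrix.mem_specialUnitaryGroup_fin_two_iff {A : Matrix (Fin 2) (Fin 2) ℂ} :
    A ∈ SU₂ ↔
      A 1 1 = conj (A 0 0) ∧ A 1 0 = -conj (A 0 1) ∧ ‖A 0 0‖ ^ 2 + ‖A 0 1‖ ^ 2 = 1 := by
  have hnorm : ∀ z : ℂ, z * conj z = ((‖z‖ ^ 2 : ℝ) : ℂ) := fun z => by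
    rw [Complex.mul_conj, Complex.normSq_eq_norm_sq]
  rw [Matrix.mem_specialUnitaryGroup_iff, Matrix.mem_unitaryGroup_iff]
  constructor
  · rintro ⟨hunit, hdet⟩
    have hadj : star A = A.adjugate := by
      rw [← Matrix.inv_eq_right_inv hunit, Matrix.inv_def, hdet]; simp
    have h00 := congrFun (congrFun hadj 0) 0
    have h10 := congrFun (congrFun hadj 1) 0
    have hrow := congrFun (congrFun hunit 0) 0
    simp [Matrix.adjugate_fin_two, Matrix.mul_apply, Fin.sum_univ_two] at h00 h10 hrow
    refine ⟨h00.symm, by simp [h10], ?_⟩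
    rw [hnorm, hnorm] at hrow
    exact_mod_cast hrow
  · rintro ⟨h11, h10, hnorm1⟩
    have h : ((‖A 0 0‖ ^ 2 : ℝ) : ℂ) + ((‖A 0 1‖ ^ 2 : ℝ) : ℂ) = 1 := by exact_mod_cast hnorm1
    rw [← hnorm, ← hnorm] at h
    rw [Matrix.eta_fin_two A, h11, h10]
    refine ⟨?_, ?_⟩
    · ext i j
      fin_cases i <;> fin_cases j <;> simp [Matrix.mul_apply, Fin.sum_univ_two] <;>
        first | ring1 | linear_combination h
    · simp [Matrix.det_fin_two]; linear_combination h

theorem Matrix.ext_of_mem_specialUnitaryGroup_fin_two {A B : Matrix (Fin 2) (Fin 2) ℂ}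
    (hA : A ∈ SU₂) (hB : B ∈ SU₂) (h00 : A 0 0 = B 0 0) (h01 : A 0 1 = B 0 1) : A = B := by
  obtain ⟨hA11, hA10, -⟩ := Matrix.mem_specialUnitaryGroup_fin_two_iff.1 hA
  obtain ⟨hB11, hB10, -⟩ := Matrix.mem_specialUnitaryGroup_fin_two_iff.1 hB
  rw [Matrix.eta_fin_two A, Matrix.eta_fin_two B, hA11, hA10, hB11, hB10, h00, h01]

theorem Rot_mem_specialUnitaryGroup (θ ψ φ : ℝ) : Rot θ ψ φ ∈ SU₂ := by
  rw [Matrix.mem_specialUnitaryGroup_fin_two_iff]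
  refine ⟨?_, ?_, ?_⟩
  · simp [Rot, Complex.conj_ofReal, -Complex.ofReal_cos, -Complex.ofReal_sin]
  · simp [Rot, Complex.conj_ofReal, ← Complex.exp_conj, -Complex.ofReal_cos,
      -Complex.ofReal_sin]
  · simp [Rot, Complex.sq_norm, Complex.normSq_apply, Complex.norm_exp, mul_pow,
      -Complex.ofReal_cos, -Complex.ofReal_sin]
    linear_combination sin_sq_add_cos_sq (φ / 2) + sin (φ / 2) ^ 2 * sin_sq_add_cos_sq θ

noncomputable def tilt (A : Matrix (Fin 2) (Fin 2) ℂ) : ℝ := arcsin ‖A 0 1‖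

theorem tilt_nonneg (A : Matrix (Fin 2) (Fin 2) ℂ) : 0 ≤ tilt A :=
  arcsin_nonneg.2 (norm_nonneg _)

section tilt

variable {A B : Matrix (Fin 2) (Fin 2) ℂ}

theorem sin_tilt (hA : A ∈ SU₂) : sin (tilt A) = ‖A 0 1‖ := by
  have h := (Matrix.mem_specialUnitaryGroup_fin_two_iff.1 hA).2.2
  exact sin_arcsin (by linarith [norm_nonneg (A 0 1)]) (by nlinarith [norm_nonneg (A 0 0)])

theorem cos_tilt (hA : A ∈ SU₂) : cos (tilt A) = ‖A 0 0‖ := by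
  have h := (Matrix.mem_specialUnitaryGroup_fin_two_iff.1 hA).2.2
  rw [tilt, cos_arcsin, ← sqrt_sq (norm_nonneg (A 0 0))]
  congr 1
  linarith

theorem tilt_mul_le (hA : A ∈ SU₂) (hB : B ∈ SU₂) : tilt (A * B) ≤ tilt A + tilt B := by
  rcases le_or_gt (π / 2) (tilt A + tilt B) with hle | hlt
  · exact (arcsin_le_pi_div_two _).trans hle
  have hB11 := (Matrix.mem_specialUnitaryGroup_fin_two_iff.1 hB).1
  have hsin : ‖(A * B) 0 1‖ ≤ sin (tilt A + tilt B) :=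
    calc ‖(A * B) 0 1‖ = ‖A 0 0 * B 0 1 + A 0 1 * B 1 1‖ := by
          simp [Matrix.mul_apply, Fin.sum_univ_two]
      _ ≤ ‖A 0 0‖ * ‖B 0 1‖ + ‖A 0 1‖ * ‖B 0 0‖ := by
          simpa [hB11] using norm_add_le (A 0 0 * B 0 1) (A 0 1 * B 1 1)
      _ = sin (tilt A + tilt B) := by
          rw [sin_add, sin_tilt hA, sin_tilt hB, cos_tilt hA, cos_tilt hB]; ring
  calc tilt (A * B) ≤ arcsin (sin (tilt A + tilt B)) := arcsin_le_arcsin hsin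
    _ = tilt A + tilt B :=
      arcsin_sin (by linarith [tilt_nonneg A, tilt_nonneg B, pi_pos]) hlt.le

end tilt

theorem abs_arcsin (x : ℝ) : |arcsin x| = arcsin |x| := by
  rcases le_total 0 x with hx | hx
  · rw [abs_of_nonneg hx, abs_of_nonneg (arcsin_nonneg.2 hx)]
  · rw [abs_of_nonpos hx, abs_of_nonpos (arcsin_nonpos.2 hx), arcsin_neg]

theorem tilt_Rot (θ ψ φ : ℝ) : tilt (Rot θ ψ φ) = |delta1 θ φ| := by
  rw [tilt, delta1, abs_arcsin, abs_mul, mul_comm]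
  simp [Rot, Complex.norm_exp, -Complex.ofReal_cos, -Complex.ofReal_sin]

theorem tilt_Rot_le {Θ : ℝ} (hΘ : 0 ≤ Θ) (ψ γ : ℝ) : tilt (Rot Θ ψ γ) ≤ Θ := by
  rcases le_total (π / 2) Θ with hle | hle
  · exact (arcsin_le_pi_div_two _).trans hle
  have hsin : 0 ≤ sin Θ := sin_nonneg_of_nonneg_of_le_pi hΘ (by linarith [pi_pos])
  calc tilt (Rot Θ ψ γ) = arcsin (sin Θ * |sin (γ / 2)|) := by
        rw [tilt_Rot, delta1, abs_arcsin, abs_mul, abs_of_nonneg hsin]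
    _ ≤ arcsin (sin Θ) :=
        arcsin_le_arcsin (mul_le_of_le_one_right hsin (abs_sin_le_one _))
    _ = Θ := arcsin_sin (by linarith [pi_pos]) hle

theorem tilt_Rot_zero_zero (β : ℝ) : tilt (Rot 0 0 β) = 0 := by
  simp [tilt_Rot, delta1]

theorem Rot_zero_zero_eq_diagonal (β : ℝ) :
    Rot 0 0 β = Matrix.diagonal ![Complex.exp (↑(-(β / 2)) * Complex.I),
      Complex.exp (↑(β / 2) * Complex.I)] := by
  rw [Complex.exp_mul_I, Complex.exp_mul_I]
  ext i j
  fin_cases i <;> fin_cases j <;> simp [Rot] <;> ring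

theorem exists_eq_Rot_z_mul_Rot_x_mul_Rot_z {A : Matrix (Fin 2) (Fin 2) ℂ} (hA : A ∈ SU₂) :
    ∃ α ω : ℝ, A = Rot 0 0 α * Rot (π / 2) 0 (2 * tilt A) * Rot 0 0 ω := by
  -- match the phases: `-(α + ω) / 2 = arg (A 0 0)` and `(ω - α - π) / 2 = arg (A 0 1)`
  refine ⟨-(A 0 0).arg - (A 0 1).arg - π / 2, -(A 0 0).arg + (A 0 1).arg + π / 2,
    Matrix.ext_of_mem_specialUnitaryGroup_fin_two hA (Submonoid.mul_mem _ (Submonoid.mul_mem _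
      (Rot_mem_specialUnitaryGroup _ _ _) (Rot_mem_specialUnitaryGroup _ _ _))
      (Rot_mem_specialUnitaryGroup _ _ _)) ?_ ?_⟩ <;>
  simp only [Rot_zero_zero_eq_diagonal, Matrix.diagonal_mul, Matrix.mul_diagonal]
  · conv_lhs => rw [← Complex.norm_mul_exp_arg_mul_I (A 0 0), ← cos_tilt hA]
    simp [Rot, -Complex.ofReal_cos, -Complex.ofReal_sin]
    rw [mul_right_comm, ← Complex.exp_add, mul_comm]
    congr 2
    ring
  · conv_lhs => rw [← Complex.norm_mul_exp_arg_mul_I (A 0 1), ← sin_tilt hA]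
    simp [Rot, -Complex.ofReal_cos, -Complex.ofReal_sin]
    rw [show ∀ e e' s : ℂ, -(e * (Complex.I * s) * e') = s * (e * e' * -Complex.I) from
      fun _ _ _ => by ring, ← Complex.exp_neg_pi_div_two_mul_I, ← Complex.exp_add,
      ← Complex.exp_add]
    congr 2
    ring

theorem exists_mem_Ico_tilt_Rot_eq {Θ δ : ℝ} (hΘ : 0 < Θ) (hΘπ : Θ ≤ π / 2) (hδ : 0 ≤ δ)
    (hδΘ : δ ≤ Θ) (ψ : ℝ) : ∃ γ ∈ Set.Ico 0 (4 * π), tilt (Rot Θ ψ γ) = δ := by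
  have hsinΘ : 0 < sin Θ := sin_pos_of_pos_of_lt_pi hΘ (by linarith [pi_pos])
  have hsinδ : 0 ≤ sin δ := sin_nonneg_of_nonneg_of_le_pi hδ (by linarith [pi_pos])
  have hr : sin δ / sin Θ ≤ 1 :=
    (div_le_one hsinΘ).2 (sin_le_sin_of_le_of_le_pi_div_two (by linarith) hΘπ hδΘ)
  have hr' : 0 ≤ sin δ / sin Θ := div_nonneg hsinδ hsinΘ.le
  refine ⟨2 * arcsin (sin δ / sin Θ), ⟨by linarith [arcsin_nonneg.2 hr'], ?_⟩, ?_⟩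
  · linarith [arcsin_le_pi_div_two (sin δ / sin Θ), pi_pos]
  · rw [tilt_Rot, delta1, mul_div_cancel_left₀ _ two_ne_zero, sin_arcsin (by linarith) hr,
      mul_div_cancel₀ _ hsinΘ.ne', arcsin_sin (by linarith [pi_pos]) (by linarith),
      abs_of_nonneg hδ]

theorem exists_Rot_x_eq_Rot_z_mul_Rot_mul_Rot_z {Θ δ : ℝ} (hΘ : 0 < Θ) (hΘπ : Θ ≤ π / 2)
    (hδ : 0 ≤ δ) (hδΘ : δ ≤ Θ) (ψ : ℝ) : ∃ γ ∈ Set.Ico 0 (4 * π), ∃ a b : ℝ,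
      Rot (π / 2) 0 (2 * δ) = Rot 0 0 a * Rot Θ ψ γ * Rot 0 0 b := by
  obtain ⟨γ, hγ, htilt⟩ := exists_mem_Ico_tilt_Rot_eq hΘ hΘπ hδ hδΘ ψ
  obtain ⟨a, b, h⟩ := exists_eq_Rot_z_mul_Rot_x_mul_Rot_z (Rot_mem_specialUnitaryGroup Θ ψ γ)
  refine ⟨γ, hγ, -a, -b, ?_⟩
  rw [h, htilt]
  simp only [← mul_assoc, Rot_mul_Rot, neg_add_cancel, Rot_angle_zero, one_mul]
  rw [mul_assoc, Rot_mul_Rot, add_neg_cancel, Rot_angle_zero, mul_one]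

noncomputable def zmzProd (Θ : ℝ) (β γ : ℕ → ℝ) (k : ℕ) : Matrix (Fin 2) (Fin 2) ℂ :=
  Rot 0 0 (β 0) * ((List.range k).map (fun i => Rot Θ 0 (γ (i + 1)) * Rot 0 0 (β (i + 1)))).prod

theorem zmzProd_mem_specialUnitaryGroup (Θ : ℝ) (β γ : ℕ → ℝ) (k : ℕ) :
    zmzProd Θ β γ k ∈ SU₂ :=
  Submonoid.mul_mem _ (Rot_mem_specialUnitaryGroup _ _ _) <| Submonoid.list_prod_mem _ <| by
    simp only [List.mem_map]
    rintro _ ⟨i, -, rfl⟩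
    exact Submonoid.mul_mem _ (Rot_mem_specialUnitaryGroup _ _ _)
      (Rot_mem_specialUnitaryGroup _ _ _)

theorem zmzProd_succ (Θ : ℝ) (β γ : ℕ → ℝ) (k : ℕ) :
    zmzProd Θ β γ (k + 1) = zmzProd Θ β γ k * (Rot Θ 0 (γ (k + 1)) * Rot 0 0 (β (k + 1))) := by
  simp [zmzProd, List.range_succ, mul_assoc]

theorem zmzProd_update_succ (Θ : ℝ) (β γ : ℕ → ℝ) (k : ℕ) (b c : ℝ) :
    zmzProd Θ (Function.update β (k + 1) b) (Function.update γ (k + 1) c) (k + 1) =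
      zmzProd Θ β γ k * (Rot Θ 0 c * Rot 0 0 b) := by
  rw [zmzProd_succ, Function.update_self, Function.update_self]
  congr 1
  rw [zmzProd, zmzProd, Function.update_of_ne (by omega)]
  congr 2
  refine List.map_congr_left fun i hi => ?_
  have hik : i + 1 ≠ k + 1 := by simp at hi; omega
  rw [Function.update_of_ne hik, Function.update_of_ne hik]

theorem tilt_zmzProd_le {Θ : ℝ} (hΘ : 0 ≤ Θ) (β γ : ℕ → ℝ) (k : ℕ) :
    tilt (zmzProd Θ β γ k) ≤ k * Θ := by
  induction k with
  | zero => simp [zmzProd, tilt_Rot_zero_zero]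
  | succ k ih =>
    have hm := Rot_mem_specialUnitaryGroup Θ 0 (γ (k + 1))
    have hz := Rot_mem_specialUnitaryGroup 0 0 (β (k + 1))
    calc tilt (zmzProd Θ β γ (k + 1))
        ≤ tilt (zmzProd Θ β γ k) +
            (tilt (Rot Θ 0 (γ (k + 1))) + tilt (Rot 0 0 (β (k + 1)))) := by
          rw [zmzProd_succ]
          linarith [tilt_mul_le (zmzProd_mem_specialUnitaryGroup Θ β γ k)
            (Submonoid.mul_mem _ hm hz), tilt_mul_le hm hz]
      _ ≤ k * Θ + (Θ + 0) := by
          gcongr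
          · exact tilt_Rot_le hΘ _ _
          · exact (tilt_Rot_zero_zero _).le
      _ = (k + 1 : ℕ) * Θ := by push_cast; ring

theorem exists_zmzProd_eq {Θ : ℝ} (hΘ : 0 < Θ) (hΘπ : Θ ≤ π / 2) (k : ℕ) {δ : ℝ} (hδ : 0 ≤ δ)
    (hδk : δ ≤ k * Θ) (α ω : ℝ) : ∃ β γ : ℕ → ℝ,
      (∀ i ≤ k, β i ∈ Set.Ico 0 (4 * π)) ∧ (∀ i, 1 ≤ i → i ≤ k → γ i ∈ Set.Ico 0 (4 * π)) ∧
      Rot 0 0 α * Rot (π / 2) 0 (2 * δ) * Rot 0 0 ω = zmzProd Θ β γ k := by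
  induction k generalizing δ ω with
  | zero =>
    obtain rfl : δ = 0 := le_antisymm (by simpa using hδk) hδ
    obtain ⟨β₀, hβ₀, hRot⟩ := exists_mem_Ico_Rot_eq 0 0 (α + ω)
    refine ⟨fun _ => β₀, 0, fun _ _ => hβ₀, by omega, ?_⟩
    rw [zmzProd, mul_zero, Rot_angle_zero, mul_one, Rot_mul_Rot, hRot]
    simp
  | succ k ih =>
    set δ₂ := min δ Θ
    have hδ₁ : 0 ≤ δ - δ₂ := sub_nonneg.2 (min_le_left δ Θ)
    have hδ₁k : δ - δ₂ ≤ k * Θ := by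
      push_cast at hδk
      rcases le_total δ Θ with h | h
      · simp [δ₂, h]; positivity
      · simp [δ₂, h]; linarith
    obtain ⟨c, hc, a, b, hX⟩ := exists_Rot_x_eq_Rot_z_mul_Rot_mul_Rot_z hΘ hΘπ
      (le_min hδ hΘ.le) (min_le_right δ Θ) 0
    obtain ⟨β, γ, hβ, hγ, hU⟩ := ih hδ₁ hδ₁k a
    obtain ⟨y, hy, hRy⟩ := exists_mem_Ico_Rot_eq 0 0 (b + ω)
    refine ⟨Function.update β (k + 1) y, Function.update γ (k + 1) c, fun i hik => ?_,
      fun i hi hik => ?_, ?_⟩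
    · rcases eq_or_ne i (k + 1) with rfl | hne
      · simpa using hy
      · simpa [hne] using hβ i (by omega)
    · rcases eq_or_ne i (k + 1) with rfl | hne
      · simpa using hc
      · simpa [hne] using hγ i hi (by omega)
    · rw [zmzProd_update_succ, ← hU, hRy]
      calc Rot 0 0 α * Rot (π / 2) 0 (2 * δ) * Rot 0 0 ω
          = Rot 0 0 α * Rot (π / 2) 0 (2 * (δ - δ₂)) * Rot (π / 2) 0 (2 * δ₂) * Rot 0 0 ω := by
            rw [mul_assoc (Rot 0 0 α) _ (Rot (π / 2) 0 (2 * δ₂)), Rot_mul_Rot]; ring_nf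
        _ = _ := by rw [hX]; simp only [mul_assoc, Rot_mul_Rot]

theorem stmt11_general (Θ : ℝ) (hΘ : Θ ∈ Set.Ioc 0 (π/2)) (l : ℕ) (hl : 1 ≤ l)
    (θ ψ φ : ℝ) :
    (∃ β γ : ℕ → ℝ,
      (∀ i < l, β i ∈ Set.Ico 0 (4*π)) ∧
      (∀ i, 1 ≤ i → i ≤ l - 1 → γ i ∈ Set.Ico 0 (4*π)) ∧
      Rot θ ψ φ =
        Rot 0 0 (β 0) *
          ((List.range (l - 1)).map (fun i => Rot Θ 0 (γ (i+1)) * Rot 0 0 (β (i+1)))).prod) ↔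
    |delta1 θ φ| ≤ (l - 1 : ℕ) * Θ := by
  rw [← tilt_Rot]
  constructor
  · rintro ⟨β, γ, -, -, hprod⟩
    rw [hprod]
    exact tilt_zmzProd_le hΘ.1.le β γ (l - 1)
  · intro htilt
    obtain ⟨α, ω, hαω⟩ :=
      exists_eq_Rot_z_mul_Rot_x_mul_Rot_z (Rot_mem_specialUnitaryGroup θ ψ φ)
    obtain ⟨β, γ, hβ, hγ, hprod⟩ :=
      exists_zmzProd_eq hΘ.1 hΘ.2 (l - 1) (tilt_nonneg _) htilt α ω
    exact ⟨β, γ, fun i hi => hβ i (by omega), hγ, hαω.trans hprod⟩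

theorem stmt11 (Θ : ℝ) (hΘ : Θ ∈ Set.Ioc 0 (π/2)) (l : ℕ) (hl : 1 ≤ l)
    (θ ψ φ : ℝ) (hθ : θ ∈ Set.Ico 0 π) (hψ : ψ ∈ Set.Ico 0 π) (hφ : φ ∈ Set.Ico 0 (4*π)) :
    (∃ β γ : ℕ → ℝ,
      (∀ i < l, β i ∈ Set.Ico 0 (4*π)) ∧
      (∀ i, 1 ≤ i → i ≤ l - 1 → γ i ∈ Set.Ico 0 (4*π)) ∧
      Rot θ ψ φ =
        Rot 0 0 (β 0) *
          ((List.range (l - 1)).map (fun i => Rot Θ 0 (γ (i+1)) * Rot 0 0 (β (i+1)))).prod) ↔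
    |delta1 θ φ| ≤ (l - 1 : ℕ) * Θ :=
  stmt11_general Θ hΘ l hl θ ψ φ
end
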